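/- For Re(s) > 2 and a positive integer w, ζ_B(s; 1/w, 1, 1) = w^{s−1} ζ_R(s−1) − (1/w) Σ_{j=1}^{w−1} j · ζ_H(s; j/w). -/

import Mathlib

/-- The Barnes double zeta function, defined for `Re s > 2` by the double series
`ζ_B(s; a, b, x) = Σ_{m,n≥0} (a m + b n + x)^{-s}`. -/
noncomputable def barnesZeta (s : ℂ) (a b x : ℝ) : ℂ :=
  ∑' p : ℕ × ℕ, ((a * p.1 + b * p.2 + x : ℝ) : ℂ) ^ (-s)

/-- The Hurwitz zeta function, defined for `Re s > 1` by the series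
`ζ_H(s; x) = Σ_{m≥0} (m + x)^{-s}`. -/
noncomputable def hurwitzZetaSeries (s : ℂ) (x : ℝ) : ℂ :=
  ∑' m : ℕ, ((m + x : ℝ) : ℂ) ^ (-s)

/-!
Write `m = j + w q` with `0 ≤ j < w`. Then `m / w + n + 1 = (q + n) + 1 + j / w`, and since
exactly `t + 1` pairs `(q, n)` have `q + n = t`, the part of the double series with residue `j`
is `Σ_{u ≥ 0} u (u + j/w)^{-s} = ζ_H(s - 1; j/w) - (j/w) ζ_H(s; j/w)`. Summing over `j`, the
distribution relation `Σ_{j < w} ζ_H(s; j/w) = w^s ζ_R(s)`, taken at `s - 1`, gives the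
Riemann zeta term.
-/

open Complex Finset

theorem hasSum_antidiagonal_comp_add {M : Type*} [AddCommMonoid M] [TopologicalSpace M]
    (g : ℕ → M) (t : ℕ) :
    HasSum (fun p : antidiagonal t => g ((p : ℕ × ℕ).1 + (p : ℕ × ℕ).2)) ((t + 1) • g t) := by
  rw [← Nat.card_antidiagonal, ← sum_const, ← sum_coe_sort]
  convert hasSum_fintype _ using 2 with p
  rw [mem_antidiagonal.1 p.2]

theorem hasSum_comp_fst_add_snd {E : Type*} [NormedAddCommGroup E] [CompleteSpace E] {g : ℕ → E}
    (hg : Summable fun t : ℕ => ((t : ℝ) + 1) * ‖g t‖) :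
    HasSum (fun p : ℕ × ℕ => g (p.1 + p.2)) (∑' t : ℕ, (t + 1) • g t) := by
  let e := HasAntidiagonal.sigmaAntidiagonalEquivProd (A := ℕ)
  have hnorm : Summable fun p : ℕ × ℕ => ‖g (p.1 + p.2)‖ := by
    rw [← e.summable_iff]
    refine (summable_sigma_of_nonneg fun _ => norm_nonneg _).2 ⟨fun _ => .of_finite, ?_⟩
    refine hg.congr fun t => ((hasSum_antidiagonal_comp_add (‖g ·‖) t).tsum_eq.trans ?_).symm
    simp [nsmul_eq_mul]
  have hsum : Summable fun t : ℕ => (t + 1) • g t :=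
    .of_norm_bounded hg fun t => by simpa using norm_nsmul_le (n := t + 1) (a := g t)
  rw [← e.hasSum_iff]
  exact hsum.hasSum.sigma_of_hasSum (hasSum_antidiagonal_comp_add g)
    (e.summable_iff.2 hnorm.of_norm)

theorem summable_ofReal_mul_add_mul_add_cpow_neg {a b x : ℝ} (ha : 0 < a) (hb : 0 < b)
    (hx : 0 < x) {s : ℂ} (hs : 2 < s.re) :
    Summable fun p : ℕ × ℕ => ((a * p.1 + b * p.2 + x : ℝ) : ℂ) ^ (-s) := by
  set c := min a (min b x)
  have hc : 0 < c := lt_min ha (lt_min hb hx)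
  have hbound : Summable fun t : ℕ => ((t : ℝ) + 1) * ‖(c * (t + 1)) ^ (-s.re)‖ := by
    have := (summable_nat_add_iff 1).2 (Real.summable_nat_rpow.2 (by linarith : 1 - s.re < -1))
    refine (this.mul_left (c ^ (-s.re))).congr fun t => ?_
    have ht : (0 : ℝ) < t + 1 := by positivity
    push_cast
    rw [Real.norm_of_nonneg (by positivity), Real.mul_rpow hc.le ht.le, sub_eq_neg_add,
      Real.rpow_add_one ht.ne']
    ring
  refine .of_norm ((hasSum_comp_fst_add_snd hbound).summable.of_nonneg_of_le
    (fun _ => norm_nonneg _) fun p => ?_)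
  have hle : c * ((p.1 + p.2 : ℕ) + 1) ≤ a * p.1 + b * p.2 + x := by
    have hca : c ≤ a := min_le_left _ _
    have hcb : c ≤ b := (min_le_right _ _).trans (min_le_left _ _)
    have hcx : c ≤ x := (min_le_right _ _).trans (min_le_right _ _)
    push_cast
    nlinarith [(p.1.cast_nonneg : (0 : ℝ) ≤ p.1), (p.2.cast_nonneg : (0 : ℝ) ≤ p.2)]
  rw [norm_cpow_eq_rpow_re_of_pos (by positivity), neg_re]
  exact Real.rpow_le_rpow_of_nonpos (by positivity) hle (by linarith)

theorem summable_ofReal_nat_add_cpow_neg {s : ℂ} (hs : 1 < s.re) {x : ℝ} (hx : 0 ≤ x) :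
    Summable fun m : ℕ => ((m + x : ℝ) : ℂ) ^ (-s) := by
  refine .of_norm (((Real.summable_one_div_nat_add_rpow x s.re).2 hs).congr fun m => ?_)
  have hmx : 0 ≤ (m : ℝ) + x := by positivity
  have hs₀ : (-s).re ≠ 0 := by rw [neg_re]; exact neg_ne_zero.2 (by linarith)
  rw [norm_cpow_eq_rpow_re_of_nonneg hmx hs₀, neg_re, Real.rpow_neg hmx, abs_of_nonneg hmx, one_div]

theorem mul_cpow_neg_eq_cpow_neg_sub_one (z : ℂ) {s : ℂ} (hs : s ≠ 1) :
    z * z ^ (-s) = z ^ (-(s - 1)) := by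
  rcases eq_or_ne z 0 with rfl | hz
  · rw [zero_mul, zero_cpow (neg_ne_zero.2 (sub_ne_zero.2 hs))]
  · rw [neg_sub, sub_eq_neg_add, cpow_add _ _ hz, cpow_one, mul_comm]

theorem hasSum_nat_mul_ofReal_nat_add_cpow_neg {s : ℂ} (hs : 2 < s.re) {x : ℝ} (hx : 0 ≤ x) :
    HasSum (fun u : ℕ => (u : ℂ) * ((u + x : ℝ) : ℂ) ^ (-s))
      (hurwitzZetaSeries (s - 1) x - x * hurwitzZetaSeries s x) := by
  have hs₁ : 1 < (s - 1).re := by rw [sub_re, one_re]; linarith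
  refine ((summable_ofReal_nat_add_cpow_neg hs₁ hx).hasSum.sub
    ((summable_ofReal_nat_add_cpow_neg (by linarith) hx).hasSum.mul_left (x : ℂ))).congr_fun
    fun u => ?_
  have hs1 : s ≠ 1 := by rintro rfl; norm_num at hs
  rw [← mul_cpow_neg_eq_cpow_neg_sub_one _ hs1]
  push_cast
  ring

theorem hasSum_ofReal_add_add_cpow_neg {s : ℂ} (hs : 2 < s.re) {x : ℝ} (hx : 0 ≤ x) :
    HasSum (fun p : ℕ × ℕ => ((p.1 + p.2 + 1 + x : ℝ) : ℂ) ^ (-s))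
      (hurwitzZetaSeries (s - 1) x - x * hurwitzZetaSeries s x) := by
  have h := (hasSum_nat_add_iff' 1).2 (hasSum_nat_mul_ofReal_nat_add_cpow_neg hs hx)
  simp only [range_one, sum_singleton, Nat.cast_zero, zero_mul, sub_zero] at h
  let g : ℕ → ℂ := fun t => ((t + 1 + x : ℝ) : ℂ) ^ (-s)
  have hg (t : ℕ) : (t + 1) • g t = ((t + 1 : ℕ) : ℂ) * (((t + 1 : ℕ) + x : ℝ) : ℂ) ^ (-s) := by
    simp [g, nsmul_eq_mul]
  have hsum : Summable fun t : ℕ => ((t : ℝ) + 1) * ‖g t‖ := by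
    refine (summable_norm_iff.2 h.summable).congr fun t => ?_
    rw [← hg, RCLike.norm_nsmul ℝ, nsmul_eq_mul]
    push_cast
    rfl
  have key := hasSum_comp_fst_add_snd hsum
  rw [tsum_congr hg, h.tsum_eq] at key
  refine key.congr_fun fun p => ?_
  simp [g]

theorem ZMod.sum_comp_val {M : Type*} [AddCommMonoid M] (w : ℕ) [NeZero w] (f : ℕ → M) :
    ∑ j : ZMod w, f j.val = ∑ j ∈ range w, f j := by
  obtain ⟨k, rfl⟩ := Nat.exists_eq_add_one_of_ne_zero (NeZero.ne w)
  exact Fin.sum_univ_eq_sum_range f (k + 1)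

-- The `j = 0` term is `ζ_R(s)` since `(0 : ℂ) ^ (-s) = 0`, matching `zeta_eq_tsum_one_div_nat_cpow`.
theorem sum_range_hurwitzZetaSeries_div {w : ℕ} (hw : 0 < w) {s : ℂ} (hs : 1 < s.re) :
    ∑ j ∈ range w, hurwitzZetaSeries s (j / w) = (w : ℂ) ^ s * riemannZeta s := by
  have := NeZero.of_pos hw
  rw [zeta_eq_tsum_one_div_nat_cpow hs,
    Nat.sumByResidueClasses (Complex.summable_one_div_nat_cpow.2 hs) w, mul_sum,
    ← ZMod.sum_comp_val w]
  refine sum_congr rfl fun j _ => ?_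
  rw [hurwitzZetaSeries, ← tsum_mul_left]
  refine tsum_congr fun m => ?_
  have hw' : (0 : ℝ) < w := by exact_mod_cast hw
  have : (m + j.val / w : ℝ) = ((j.val + w * m : ℕ) : ℝ) / w := by
    push_cast; field_simp; ring
  rw [this, ofReal_div, div_cpow_ofReal_nonneg (by positivity) hw'.le, cpow_neg, cpow_neg]
  push_cast
  field_simp

/-- For `Re s > 2` and a positive integer `w`,
`ζ_B(s; 1/w, 1, 1) = w^{s−1} ζ_R(s−1) − (1/w) Σ_{j=1}^{w−1} j ζ_H(s; j/w)`. -/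
theorem barnesZeta_inv_w (w : ℕ) (hw : 0 < w) (s : ℂ) (hs : 2 < s.re) :
    barnesZeta s (1 / w : ℝ) 1 1 =
      (w : ℂ) ^ (s - 1) * riemannZeta (s - 1) -
        (1 / w : ℂ) * ∑ j ∈ Finset.Icc 1 (w - 1), (j : ℂ) * hurwitzZetaSeries s ((j : ℝ) / w) := by
  have := NeZero.of_pos hw
  have hw' : (0 : ℝ) < w := by exact_mod_cast hw
  let E : ZMod w × (ℕ × ℕ) ≃ ℕ × ℕ := (Equiv.prodAssoc (ZMod w) ℕ ℕ).symm.trans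
    ((Nat.residueClassesEquiv w).symm.prodCongr (Equiv.refl ℕ))
  have hfiber (j : ZMod w) : HasSum
      (fun p : ℕ × ℕ => ((1 / w * (E (j, p)).1 + 1 * (E (j, p)).2 + 1 : ℝ) : ℂ) ^ (-s))
      (hurwitzZetaSeries (s - 1) (j.val / w) -
        ((j.val / w : ℝ) : ℂ) * hurwitzZetaSeries s (j.val / w)) := by
    refine (hasSum_ofReal_add_add_cpow_neg hs (by positivity)).congr_fun fun p => ?_
    rw [show E (j, p) = (j.val + w * p.1, p.2) from rfl]
    congr 2
    push_cast
    field_simp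
    ring
  have hsum := summable_ofReal_mul_add_mul_add_cpow_neg (one_div_pos.2 hw') one_pos one_pos hs
  rw [barnesZeta, ((E.hasSum_iff.2 hsum.hasSum).prod_fiberwise hfiber).unique (hasSum_fintype _),
    ZMod.sum_comp_val w fun n => hurwitzZetaSeries (s - 1) (n / w) -
        ((n / w : ℝ) : ℂ) * hurwitzZetaSeries s (n / w),
    sum_sub_distrib, sum_range_hurwitzZetaSeries_div hw (by rw [sub_re, one_re]; linarith),
    sum_range_eq_add_Ico _ hw, ← Icc_sub_one_right_eq_Ico_of_not_isMin (by simpa using hw.ne'),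
    mul_sum]
  simp only [Nat.cast_zero, zero_div, ofReal_zero, zero_mul, zero_add]
  congr 1
  refine sum_congr rfl fun j _ => ?_
  push_cast
  ring
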